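/- arXiv:1901.06554 — 3 statements merged into one kernel-verified Lean document; each statement's English description precedes it below -/
import Mathlib

section
/- If S = V₋P M_L and S' = V₋P' M_{L'} with P, P' symmetric and L, L' invertible, then S' S⁻¹ = V₋(P' - (L⁻¹L')ᵀ P (L⁻¹L')) M_{L⁻¹L'}. -/
/-!
`P ↦ V₋P` is an additive homomorphism and `L ↦ M_L` reverses products, while conjugation by
`M_L` acts on the shears by the congruence `P ↦ Lᵀ P L`. Hence `(V₋P M_L)⁻¹ = M_{L⁻¹} V₋(-P)`,
and in `S' S⁻¹ = V₋P' M_{L⁻¹L'} V₋(-P)` the middle factor can be moved to the right.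
-/

open Matrix

/-- The shear matrix V₋P = [[I, 0], [P, I]]. -/
noncomputable def Vm {n : ℕ} (P : Matrix (Fin n) (Fin n) ℝ) :
    Matrix (Fin n ⊕ Fin n) (Fin n ⊕ Fin n) ℝ :=
  fromBlocks 1 0 P 1

/-- The rescaling matrix M_L = [[L⁻¹, 0], [0, Lᵀ]]. -/
noncomputable def Mm {n : ℕ} (L : Matrix (Fin n) (Fin n) ℝ) :
    Matrix (Fin n ⊕ Fin n) (Fin n ⊕ Fin n) ℝ :=
  fromBlocks L⁻¹ 0 0 Lᵀ

section

variable {n : ℕ}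

theorem Vm_mul_Vm (P Q : Matrix (Fin n) (Fin n) ℝ) : Vm P * Vm Q = Vm (P + Q) := by
  simp [Vm, fromBlocks_multiply, add_comm]

theorem Vm_zero : Vm (0 : Matrix (Fin n) (Fin n) ℝ) = 1 := by
  simp [Vm, fromBlocks_one]

theorem Mm_mul_Mm (L K : Matrix (Fin n) (Fin n) ℝ) : Mm L * Mm K = Mm (K * L) := by
  simp [Mm, fromBlocks_multiply, Matrix.mul_inv_rev, transpose_mul]

theorem Mm_one : Mm (1 : Matrix (Fin n) (Fin n) ℝ) = 1 := by
  simp [Mm, fromBlocks_one]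

theorem Mm_mul_Vm {L : Matrix (Fin n) (Fin n) ℝ} (hL : IsUnit L.det)
    (P : Matrix (Fin n) (Fin n) ℝ) : Mm L * Vm P = Vm (Lᵀ * P * L) * Mm L := by
  simp [Mm, Vm, fromBlocks_multiply, mul_nonsing_inv_cancel_right _ _ hL]

theorem inv_Vm_mul_Mm (P : Matrix (Fin n) (Fin n) ℝ) {L : Matrix (Fin n) (Fin n) ℝ}
    (hL : IsUnit L.det) : (Vm P * Mm L)⁻¹ = Mm L⁻¹ * Vm (-P) := by
  refine inv_eq_right_inv ?_
  calc Vm P * Mm L * (Mm L⁻¹ * Vm (-P)) = Vm P * (Mm L * Mm L⁻¹) * Vm (-P) := by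
        simp only [mul_assoc]
    _ = 1 := by
        rw [Mm_mul_Mm, nonsing_inv_mul L hL, Mm_one, mul_one, Vm_mul_Vm, add_neg_cancel, Vm_zero]

end

theorem local_group_quotient_general {n : ℕ} (P P' L L' : Matrix (Fin n) (Fin n) ℝ)
    (hL : IsUnit L.det) (hL' : IsUnit L'.det) :
    (Vm P' * Mm L') * (Vm P * Mm L)⁻¹ =
      Vm (P' - (L⁻¹ * L')ᵀ * P * (L⁻¹ * L')) * Mm (L⁻¹ * L') := by
  set Q := L⁻¹ * L'
  have hQ : IsUnit Q.det := by
    rw [det_mul]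
    exact (isUnit_nonsing_inv_det L hL).mul hL'
  calc Vm P' * Mm L' * (Vm P * Mm L)⁻¹ = Vm P' * (Mm L' * Mm L⁻¹) * Vm (-P) := by
        rw [inv_Vm_mul_Mm P hL]; simp only [mul_assoc]
    _ = Vm P' * Vm (Qᵀ * -P * Q) * Mm Q := by
        rw [Mm_mul_Mm, mul_assoc, Mm_mul_Vm hQ, ← mul_assoc]
    _ = Vm (P' - Qᵀ * P * Q) * Mm Q := by
        rw [Vm_mul_Vm, mul_neg, neg_mul, ← sub_eq_add_neg]

theorem local_group_quotient {n : ℕ} (P P' L L' : Matrix (Fin n) (Fin n) ℝ)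
    (hP : Pᵀ = P) (hP' : P'ᵀ = P') (hL : IsUnit L.det) (hL' : IsUnit L'.det) :
    (Vm P' * Mm L') * (Vm P * Mm L)⁻¹ =
      Vm (P' - (L⁻¹ * L')ᵀ * P * (L⁻¹ * L')) * Mm (L⁻¹ * L') :=
  local_group_quotient_general P P' L L' hL hL'
end

section
/- Pre-Iwasawa factorization: every real 2n×2n symplectic matrix S = [[A, B], [C, D]] can be written S = V₋P M_L U where P = (CAᵀ + DBᵀ)(AAᵀ + BBᵀ)⁻¹ is symmetric, L = (AAᵀ + BBᵀ)^{-1/2} is symmetric positive definite, and U = [[X, Y], [-Y, X]] with X = (AAᵀ + BBᵀ)^{-1/2}A, Y = (AAᵀ + BBᵀ)^{-1/2}B is a symplectic rotation (U is orthogonal and symplectic). -/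
/-!
Write `Q = AAᵀ + BBᵀ`, so that `LQL = 1`. The symplectic relations `ABᵀ = BAᵀ` and
`ADᵀ - BCᵀ = 1` for the rows of `S` make `U` orthogonal and symplectic, and give
`S Uᵀ = [[QL, 0], [(CAᵀ + DBᵀ)L, L]] = V₋P M_L`. Hence `S = V₋P M_L U`, and `V₋P` is symplectic,
being `S Uᵀ M_L⁻¹`; for a lower shear this says exactly that `P` is symmetric.
-/

open Matrix

noncomputable def J (n : ℕ) : Matrix (Fin n ⊕ Fin n) (Fin n ⊕ Fin n) ℝ :=
  fromBlocks 0 1 (-1) 0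

namespace SymplecticGroup

variable {l R : Type*} [Fintype l] [DecidableEq l] [CommRing R]

theorem fromBlocks_mem_iff' {A B C D : Matrix l l R} :
    fromBlocks A B C D ∈ symplecticGroup l R ↔
      A * Bᵀ = B * Aᵀ ∧ C * Dᵀ = D * Cᵀ ∧ A * Dᵀ - B * Cᵀ = 1 := by
  rw [← transpose_mem_iff, fromBlocks_transpose, fromBlocks_mem_iff]
  simp only [transpose_transpose]

theorem mem_of_mul_mem {A B : Matrix (l ⊕ l) (l ⊕ l) R} (hAB : A * B ∈ symplecticGroup l R)
    (hB : B ∈ symplecticGroup l R) : A ∈ symplecticGroup l R := by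
  rw [mem_iff] at *
  calc A * J l R * Aᵀ = A * (B * J l R * Bᵀ) * Aᵀ := by rw [hB]
    _ = A * B * J l R * (A * B)ᵀ := by simp only [transpose_mul, Matrix.mul_assoc]
    _ = J l R := hAB

theorem fromBlocks_neg_mem {X Y : Matrix l l R} (hXY : X * Yᵀ = Y * Xᵀ)
    (hXX : X * Xᵀ + Y * Yᵀ = 1) : fromBlocks X Y (-Y) X ∈ symplecticGroup l R := by
  rw [fromBlocks_mem_iff']
  refine ⟨hXY, ?_, ?_⟩
  · rw [transpose_neg, Matrix.neg_mul, Matrix.mul_neg, hXY]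
  · rw [transpose_neg, Matrix.mul_neg, sub_neg_eq_add, hXX]

end SymplecticGroup

namespace Matrix

variable {l R : Type*} [Fintype l] [DecidableEq l] [CommRing R]

theorem fromBlocks_neg_transpose_mul_self_eq_one {X Y : Matrix l l R} (hXY : X * Yᵀ = Y * Xᵀ)
    (hXX : X * Xᵀ + Y * Yᵀ = 1) :
    (fromBlocks X Y (-Y) X)ᵀ * fromBlocks X Y (-Y) X = 1 := by
  rw [mul_eq_one_comm, fromBlocks_transpose, fromBlocks_multiply, ← fromBlocks_one]
  simp only [transpose_neg, Matrix.mul_neg, Matrix.neg_mul, neg_neg, hXY, neg_add_cancel,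
    add_comm (Y * Yᵀ), hXX]

theorem mul_eq_inv_of_mul_self_eq_inv {L Q : Matrix l l R} (hL : IsUnit L.det)
    (hLsq : L * L = Q⁻¹) : Q * L = L⁻¹ := by
  have hQ : IsUnit Q.det := by
    rw [← isUnit_nonsing_inv_det_iff, ← hLsq, det_mul]
    exact hL.mul hL
  calc Q * L = Q * (L * L) * L⁻¹ := by
        rw [← Matrix.mul_assoc, mul_nonsing_inv_cancel_right _ _ hL]
    _ = L⁻¹ := by rw [hLsq, mul_nonsing_inv _ hQ, Matrix.one_mul]

end Matrix

open SymplecticGroup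

theorem J_eq_neg (n : ℕ) : J n = -Matrix.J (Fin n) ℝ := by
  simp [_root_.J, Matrix.J, fromBlocks_neg]

theorem transpose_mul_J_mul_eq_J_iff {n : ℕ} {S : Matrix (Fin n ⊕ Fin n) (Fin n ⊕ Fin n) ℝ} :
    Sᵀ * J n * S = J n ↔ S ∈ symplecticGroup (Fin n) ℝ := by
  rw [J_eq_neg, mem_iff', Matrix.mul_neg, Matrix.neg_mul, neg_inj]

theorem Vm_mem_symplecticGroup_iff {n : ℕ} {P : Matrix (Fin n) (Fin n) ℝ} :
    Vm P ∈ symplecticGroup (Fin n) ℝ ↔ Pᵀ = P := by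
  simp [Vm, fromBlocks_mem_iff', eq_comm]

theorem Mm_mem_symplecticGroup {n : ℕ} {L : Matrix (Fin n) (Fin n) ℝ} (hL : IsUnit L.det) :
    Mm L ∈ symplecticGroup (Fin n) ℝ := by
  simp [Mm, fromBlocks_mem_iff', nonsing_inv_mul _ hL]

theorem fromBlocks_mul_transpose_fromBlocks_neg_eq_Vm_mul_Mm {n : ℕ}
    {A B C D L : Matrix (Fin n) (Fin n) ℝ}
    (hAB : A * Bᵀ = B * Aᵀ) (hAD : A * Dᵀ - B * Cᵀ = 1) (hLt : Lᵀ = L) (hL : IsUnit L.det)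
    (hLsq : L * L = (A * Aᵀ + B * Bᵀ)⁻¹) :
    fromBlocks A B C D * (fromBlocks (L * A) (L * B) (-(L * B)) (L * A))ᵀ =
      Vm ((C * Aᵀ + D * Bᵀ) * (A * Aᵀ + B * Bᵀ)⁻¹) * Mm L := by
  have hDA : D * Aᵀ - C * Bᵀ = 1 := by
    simpa [transpose_sub, transpose_mul] using congrArg transpose hAD
  rw [Vm, Mm, fromBlocks_transpose, fromBlocks_multiply, fromBlocks_multiply]
  simp only [transpose_mul, transpose_neg, hLt, Matrix.mul_neg, ← Matrix.mul_assoc,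
    ← Matrix.add_mul, Matrix.one_mul, Matrix.zero_mul, Matrix.mul_zero, add_zero, zero_add]
  congr 1
  · exact mul_eq_inv_of_mul_self_eq_inv hL hLsq
  · rw [hAB, neg_add_cancel]
  · rw [← hLsq, Matrix.mul_assoc, Matrix.mul_assoc, mul_nonsing_inv _ hL, Matrix.mul_one]
  · rw [neg_add_eq_sub, ← Matrix.sub_mul, hDA, Matrix.one_mul]

/-- Pre-Iwasawa factorization.  Here `L` is the inverse of the (unique) positive
definite square root of `A * Aᵀ + B * Bᵀ`, i.e. `L = (AAᵀ + BBᵀ)^(-1/2)`,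
`P = (CAᵀ + DBᵀ)(AAᵀ + BBᵀ)⁻¹`, `X = L * A` and `Y = L * B`. -/
theorem pre_iwasawa_factorization {n : ℕ} (A B C D L : Matrix (Fin n) (Fin n) ℝ)
    (hsymp : (fromBlocks A B C D)ᵀ * J n * fromBlocks A B C D = J n)
    (hL : L.PosDef) (hLsq : L * L = (A * Aᵀ + B * Bᵀ)⁻¹) :
    ((C * Aᵀ + D * Bᵀ) * (A * Aᵀ + B * Bᵀ)⁻¹)ᵀ
        = (C * Aᵀ + D * Bᵀ) * (A * Aᵀ + B * Bᵀ)⁻¹ ∧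
    fromBlocks A B C D =
      Vm ((C * Aᵀ + D * Bᵀ) * (A * Aᵀ + B * Bᵀ)⁻¹) * Mm L *
        fromBlocks (L * A) (L * B) (-(L * B)) (L * A) ∧
    (fromBlocks (L * A) (L * B) (-(L * B)) (L * A))ᵀ * J n *
        fromBlocks (L * A) (L * B) (-(L * B)) (L * A) = J n ∧
    (fromBlocks (L * A) (L * B) (-(L * B)) (L * A))ᵀ *
        fromBlocks (L * A) (L * B) (-(L * B)) (L * A) = 1 := by
  have hS := transpose_mul_J_mul_eq_J_iff.mp hsymp
  obtain ⟨hAB, -, hAD⟩ := fromBlocks_mem_iff'.mp hS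
  have hLt : Lᵀ = L := by simpa using hL.isHermitian.eq
  have hLdet : IsUnit L.det := (isUnit_iff_isUnit_det L).mp hL.isUnit
  have hXY : L * A * (L * B)ᵀ = L * B * (L * A)ᵀ := by
    simp only [transpose_mul, Matrix.mul_assoc, ← Matrix.mul_assoc A, hAB]
  have hXX : L * A * (L * A)ᵀ + L * B * (L * B)ᵀ = 1 := by
    calc L * A * (L * A)ᵀ + L * B * (L * B)ᵀ = L * ((A * Aᵀ + B * Bᵀ) * L) := by
          simp only [transpose_mul, hLt, Matrix.mul_add, Matrix.add_mul, Matrix.mul_assoc]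
      _ = 1 := by rw [mul_eq_inv_of_mul_self_eq_inv hLdet hLsq, mul_nonsing_inv _ hLdet]
  have hU := fromBlocks_neg_mem hXY hXX
  have hUU := fromBlocks_neg_transpose_mul_self_eq_one hXY hXX
  have hSU := fromBlocks_mul_transpose_fromBlocks_neg_eq_Vm_mul_Mm hAB hAD hLt hLdet hLsq
  refine ⟨?_, ?_, transpose_mul_J_mul_eq_J_iff.mpr hU, hUU⟩
  · rw [← Vm_mem_symplecticGroup_iff]
    exact mem_of_mul_mem (hSU ▸ Submonoid.mul_mem _ hS (transpose_mem hU))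
      (Mm_mem_symplecticGroup hLdet)
  · rw [← hSU, Matrix.mul_assoc, hUU, Matrix.mul_one]
end

section
/- Uniqueness of the pre-Iwasawa factorization: if V₋P M_L U = V₋P' M_{L'} U' with P, P' symmetric, L, L' symmetric positive definite, and U, U' symplectic rotations, then P = P', L = L', and U = U'. -/
open Matrix

/-! Write `A = V₋P M_L`. Since `U` is orthogonal, the Gram matrix `A Aᵀ = (A U)(A U)ᵀ` depends
only on the product `A U`. The matrix `A = [[L⁻¹, 0], [P L⁻¹, Lᵀ]]` is lower block-triangular,
so the top-left block of `A Aᵀ` is `L⁻¹ L⁻¹`, which determines `L` by uniqueness of positive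
square roots, and its bottom-left block `P L⁻¹ (L⁻¹)ᵀ` then determines `P`. Finally `A` is
invertible, so `U = A⁻¹ (A U)`. -/

namespace Matrix

variable {l m n R : Type*}

theorem mul_transpose_eq_of_mul_eq [Fintype n] [DecidableEq n] [CommRing R] {A B : Matrix m n R}
    {U V : Matrix n n R} (hU : Uᵀ * U = 1) (hV : Vᵀ * V = 1) (h : A * U = B * V) :
    A * Aᵀ = B * Bᵀ :=
  calc A * Aᵀ = (A * U) * (A * U)ᵀ := by
        rw [transpose_mul, ← Matrix.mul_assoc, Matrix.mul_assoc A, mul_eq_one_comm.mp hU,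
          Matrix.mul_one]
    _ = (B * V) * (B * V)ᵀ := by rw [h]
    _ = B * Bᵀ := by
        rw [transpose_mul, ← Matrix.mul_assoc, Matrix.mul_assoc B, mul_eq_one_comm.mp hV,
          Matrix.mul_one]

theorem fromBlocks_zero₁₂_mul_transpose [Fintype l] [Fintype m] [CommSemiring R]
    (A : Matrix l l R) (C : Matrix m l R) (D : Matrix m m R) :
    fromBlocks A 0 C D * (fromBlocks A 0 C D)ᵀ =
      fromBlocks (A * Aᵀ) (A * Cᵀ) (C * Aᵀ) (C * Cᵀ + D * Dᵀ) := by
  simp [fromBlocks_transpose, fromBlocks_multiply]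

open scoped ComplexOrder MatrixOrder in
theorem PosDef.eq_of_inv_mul_self_eq {𝕜 : Type*} [RCLike 𝕜] [Fintype n] [DecidableEq n]
    {L L' : Matrix n n 𝕜} (hL : L.PosDef) (hL' : L'.PosDef) (h : L⁻¹ * L⁻¹ = L'⁻¹ * L'⁻¹) :
    L = L' := by
  have hinv : L⁻¹ = L'⁻¹ :=
    (CFC.mul_self_eq_mul_self_iff _ _ hL.inv.posSemidef.nonneg hL'.inv.posSemidef.nonneg).1 h
  exact inv_inj hinv (isUnit_iff_isUnit_det L |>.1 hL.isUnit)

end Matrix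

theorem Vm_mul_Mm {n : ℕ} (P L : Matrix (Fin n) (Fin n) ℝ) :
    Vm P * Mm L = fromBlocks L⁻¹ 0 (P * L⁻¹) Lᵀ := by
  simp [Vm, Mm, fromBlocks_multiply]

theorem isUnit_Vm_mul_Mm {n : ℕ} (P : Matrix (Fin n) (Fin n) ℝ) {L : Matrix (Fin n) (Fin n) ℝ}
    (hL : IsUnit L) : IsUnit (Vm P * Mm L) := by
  rw [Vm_mul_Mm, isUnit_fromBlocks_zero₁₂, isUnit_nonsing_inv_iff, isUnit_transpose]
  exact ⟨hL, hL⟩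

theorem eq_of_Vm_mul_Mm_mul_transpose_eq {n : ℕ} {P P' L L' : Matrix (Fin n) (Fin n) ℝ}
    (hL : L.PosDef) (hL' : L'.PosDef)
    (h : Vm P * Mm L * (Vm P * Mm L)ᵀ = Vm P' * Mm L' * (Vm P' * Mm L')ᵀ) :
    P = P' ∧ L = L' := by
  rw [Vm_mul_Mm, Vm_mul_Mm, fromBlocks_zero₁₂_mul_transpose, fromBlocks_zero₁₂_mul_transpose,
    fromBlocks_inj] at h
  obtain ⟨hTL, -, hBL, -⟩ := h
  have hLs : Lᵀ = L := by simpa using hL.isHermitian.eq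
  have hL's : L'ᵀ = L' := by simpa using hL'.isHermitian.eq
  rw [transpose_nonsing_inv, transpose_nonsing_inv, hLs, hL's] at hTL
  obtain rfl : L = L' := hL.eq_of_inv_mul_self_eq hL' hTL
  have hLinv : IsUnit L⁻¹ := isUnit_nonsing_inv_iff.2 hL.isUnit
  refine ⟨?_, rfl⟩
  rwa [((isUnit_transpose L⁻¹).2 hLinv).mul_left_inj, hLinv.mul_left_inj] at hBL

theorem pre_iwasawa_uniqueness_general {n : ℕ} (P P' L L' : Matrix (Fin n) (Fin n) ℝ)
    (U U' : Matrix (Fin n ⊕ Fin n) (Fin n ⊕ Fin n) ℝ)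
    (hL : L.PosDef) (hL' : L'.PosDef)
    (hUorth : Uᵀ * U = 1)
    (hU'orth : U'ᵀ * U' = 1)
    (heq : Vm P * Mm L * U = Vm P' * Mm L' * U') :
    P = P' ∧ L = L' ∧ U = U' := by
  obtain ⟨rfl, rfl⟩ := eq_of_Vm_mul_Mm_mul_transpose_eq hL hL'
    (mul_transpose_eq_of_mul_eq hUorth hU'orth heq)
  exact ⟨rfl, rfl, (isUnit_Vm_mul_Mm P hL.isUnit).mul_right_inj.1 heq⟩

theorem pre_iwasawa_uniqueness {n : ℕ} (P P' L L' : Matrix (Fin n) (Fin n) ℝ)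
    (U U' : Matrix (Fin n ⊕ Fin n) (Fin n ⊕ Fin n) ℝ)
    (hP : Pᵀ = P) (hP' : P'ᵀ = P') (hL : L.PosDef) (hL' : L'.PosDef)
    (hU : Uᵀ * J n * U = J n) (hUorth : Uᵀ * U = 1)
    (hU' : U'ᵀ * J n * U' = J n) (hU'orth : U'ᵀ * U' = 1)
    (heq : Vm P * Mm L * U = Vm P' * Mm L' * U') :
    P = P' ∧ L = L' ∧ U = U' :=
  pre_iwasawa_uniqueness_general P P' L L' U U' hL hL' hUorth hU'orth heq
end
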